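/- Let t be a real number with 0 < t < 1. Then ∫₁^{1/t} dx / √( x(x−1)(1−tx) ) = π · ₂F₁(1/2, 1/2; 1; 1−t). (This is the period of the holomorphic differential dx/y on the Legendre elliptic curve y² = x(1−x)(1−tx) over the cycle around the interval from x = 1 to x = 1/t.) -/

import Mathlib

set_option autoImplicit false

open scoped Real

/-- Pochhammer symbol `(a)_n = a(a+1)⋯(a+n−1)` for a real number. -/
noncomputable def pochR (a : ℝ) (n : ℕ) : ℝ := ∏ k ∈ Finset.range n, (a + k)

/-- Gauss hypergeometric series `₂F₁(a,b;c;x)` (real). -/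
noncomputable def hyp2F1 (a b c x : ℝ) : ℝ :=
  ∑' n : ℕ, (pochR a n * pochR b n) / (pochR c n * (n.factorial : ℝ)) * x ^ n

/-!
Substituting `x = 1 / (1 - m sin² θ)` with `m = 1 - t` maps `(0, π/2)` monotonically onto
`(1, 1/t)` and turns the integral into `2 ∫₀^{π/2} dθ / √(1 - m sin² θ)`, twice the complete
elliptic integral `K(m)`. Expanding `(1 - z)^{-1/2}` by the binomial series and integrating
term by term with Wallis' formula `∫₀^{π/2} sin^{2n} θ dθ = (π/2) (1/2)ₙ / n!` gives
`K(m) = (π/2) Σ ((1/2)ₙ / n!)² mⁿ = (π/2) ₂F₁(1/2, 1/2; 1; m)`.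
-/

open Nat Finset Real MeasureTheory

lemma pochR_succ (a : ℝ) (n : ℕ) : pochR a (n + 1) = pochR a n * (a + n) :=
  prod_range_succ _ n

lemma pochR_one (n : ℕ) : pochR 1 n = n ! := by
  induction n with
  | zero => simp [pochR]
  | succ n ih => rw [pochR_succ, ih, factorial_succ]; push_cast; ring

lemma pochR_eq_ascPochhammer_eval (a : ℝ) (n : ℕ) :
    pochR a n = (ascPochhammer ℝ n).eval a := by
  induction n with
  | zero => simp [pochR]
  | succ n ih => rw [pochR_succ, ih, ascPochhammer_succ_eval]

lemma Ring.choose_add_natCast_sub_one_eq_pochR_div (a : ℝ) (n : ℕ) :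
    Ring.choose (a + n - 1) n = pochR a n / n ! := by
  rw [Ring.choose_eq_smul, Polynomial.descPochhammer_smeval_eq_ascPochhammer,
    show a + n - 1 - n + 1 = a by ring, Polynomial.ascPochhammer_smeval_eq_eval,
    pochR_eq_ascPochhammer_eval, smul_eq_mul, inv_mul_eq_div]

lemma hasSum_pochR_div_factorial_mul_pow (a : ℝ) {z : ℝ} (hz : |z| < 1) :
    HasSum (fun n => pochR a n / n ! * z ^ n) (1 / (1 - z) ^ a) := by
  have := (one_div_one_sub_rpow_hasFPowerSeriesOnBall_zero a).hasSum
    (y := z) (by simpa [edist_dist] using hz)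
  simpa [FormalMultilinearSeries.ofScalars_apply_eq, ← Ring.choose_add_natCast_sub_one_eq_pochR_div,
    mul_comm] using this

lemma pochR_half_div_factorial_eq_prod (n : ℕ) :
    pochR (1/2) n / n ! = ∏ i ∈ range n, (2 * (i : ℝ) + 1) / (2 * i + 2) := by
  rw [pochR, ← prod_range_add_one_eq_factorial, cast_prod, ← prod_div_distrib]
  refine prod_congr rfl fun i _ => ?_
  push_cast
  field_simp
  ring

lemma pochR_half_div_factorial_nonneg (n : ℕ) : 0 ≤ pochR (1/2) n / n ! := by
  rw [pochR_half_div_factorial_eq_prod]; positivity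

lemma pochR_half_div_factorial_le_one (n : ℕ) : pochR (1/2) n / n ! ≤ 1 := by
  rw [pochR_half_div_factorial_eq_prod]
  exact prod_le_one (fun i _ => by positivity) fun i _ =>
    (div_le_one (by positivity)).2 (by linarith)

lemma integral_sin_pow_even_half_pi (n : ℕ) :
    ∫ θ in (0:ℝ)..π/2, sin θ ^ (2 * n) = π / 2 * (pochR (1/2) n / n !) := by
  have hsymm : ∫ θ in π/2..π, sin θ ^ (2 * n) = ∫ θ in (0:ℝ)..π/2, sin θ ^ (2 * n) := by
    simpa [sin_pi_sub, show π - π / 2 = π / 2 by ring] using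
      (intervalIntegral.integral_comp_sub_left (fun θ => sin θ ^ (2 * n)) π
        (a := 0) (b := π / 2)).symm
  have hcont : Continuous fun θ => sin θ ^ (2 * n) := by fun_prop
  have hfull := intervalIntegral.integral_add_adjacent_intervals
    (hcont.intervalIntegrable (μ := volume) 0 (π/2)) (hcont.intervalIntegrable (π/2) π)
  rw [hsymm, integral_sin_pow_even, ← pochR_half_div_factorial_eq_prod] at hfull
  linarith

lemma hasSum_pochR_half_div_factorial_mul_pow {z : ℝ} (hz : |z| < 1) :
    HasSum (fun n => pochR (1/2) n / n ! * z ^ n) (1 / √(1 - z)) := by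
  rw [sqrt_eq_rpow]
  exact hasSum_pochR_div_factorial_mul_pow _ hz

lemma hyp2F1_half_half_one (x : ℝ) :
    hyp2F1 (1/2) (1/2) 1 x = ∑' n : ℕ, (pochR (1/2) n / n !) ^ 2 * x ^ n := by
  refine tsum_congr fun n => ?_
  rw [pochR_one]
  ring

lemma summable_sq_pochR_half_div_factorial_mul_pow {x : ℝ} (hx : |x| < 1) :
    Summable fun n : ℕ => (pochR (1/2) n / n !) ^ 2 * x ^ n := by
  refine (summable_geometric_of_lt_one (abs_nonneg x) hx).of_norm_bounded fun n => ?_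
  have h0 := pochR_half_div_factorial_nonneg n
  have h1 := pochR_half_div_factorial_le_one n
  rw [norm_mul, norm_pow, norm_pow, Real.norm_of_nonneg h0, Real.norm_eq_abs]
  exact mul_le_of_le_one_left (by positivity) (pow_le_one₀ h0 h1)

lemma integral_one_div_sqrt_one_sub_mul_sin_sq {m : ℝ} (hm0 : 0 ≤ m) (hm1 : m < 1) :
    ∫ θ in (0:ℝ)..π/2, 1 / √(1 - m * sin θ ^ 2) = π / 2 * hyp2F1 (1/2) (1/2) 1 m := by
  set F : ℕ → ℝ → ℝ := fun n θ => pochR (1/2) n / n ! * m ^ n * sin θ ^ (2 * n)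
  have hF_nonneg (n : ℕ) (θ : ℝ) : 0 ≤ F n θ := by
    have := pochR_half_div_factorial_nonneg n
    simp only [F, pow_mul]
    positivity
  have hF_integral (n : ℕ) :
      ∫ θ in (0:ℝ)..π/2, F n θ = π / 2 * ((pochR (1/2) n / n !) ^ 2 * m ^ n) := by
    simp only [F, intervalIntegral.integral_const_mul, integral_sin_pow_even_half_pi]
    ring
  have hseries (θ : ℝ) : 1 / √(1 - m * sin θ ^ 2) = ∑' n, F n θ := by
    have hz : |m * sin θ ^ 2| < 1 := by
      rw [abs_of_nonneg (by positivity)]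
      nlinarith [sin_sq_le_one θ]
    rw [← (hasSum_pochR_half_div_factorial_mul_pow hz).tsum_eq]
    exact tsum_congr fun n => by simp only [F, mul_pow, pow_mul, mul_assoc]
  have hsummable := (summable_sq_pochR_half_div_factorial_mul_pow
    (by rwa [abs_of_nonneg hm0])).mul_left (π / 2)
  simp only [hseries, intervalIntegral.integral_of_le (by positivity : (0:ℝ) ≤ π / 2)]
    at hF_integral ⊢
  rw [← integral_tsum_of_summable_integral_norm
    (fun n => (by fun_prop : Continuous (F n)).integrableOn_Ioc)
    (by simpa only [Real.norm_of_nonneg (hF_nonneg _ _), hF_integral] using hsummable)]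
  simp only [hF_integral, hyp2F1_half_half_one, tsum_mul_left]

section LegendreSubstitution

variable {m : ℝ}

lemma one_sub_mul_sin_sq_pos (hm : m < 1) (θ : ℝ) : 0 < 1 - m * sin θ ^ 2 := by
  rcases le_or_gt m 0 with h | h <;> nlinarith [sin_sq_le_one θ, sq_nonneg (sin θ)]

lemma hasDerivAt_inv_one_sub_mul_sin_sq (hm : m < 1) (θ : ℝ) :
    HasDerivAt (fun θ => (1 - m * sin θ ^ 2)⁻¹)
      (2 * m * sin θ * cos θ / (1 - m * sin θ ^ 2) ^ 2) θ := by
  have h := (((hasDerivAt_sin θ).fun_pow 2).const_mul m).const_sub 1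
  refine (h.fun_inv (one_sub_mul_sin_sq_pos hm θ).ne').congr_deriv ?_
  norm_num
  ring

lemma strictMonoOn_inv_one_sub_mul_sin_sq (hm0 : 0 < m) (hm1 : m < 1) :
    StrictMonoOn (fun θ => (1 - m * sin θ ^ 2)⁻¹) (Set.Icc 0 (π / 2)) := by
  refine strictMonoOn_of_deriv_pos (convex_Icc _ _)
    (fun θ _ => (hasDerivAt_inv_one_sub_mul_sin_sq hm1 θ).continuousAt.continuousWithinAt)
    fun θ hθ => ?_
  rw [interior_Icc] at hθ
  rw [(hasDerivAt_inv_one_sub_mul_sin_sq hm1 θ).deriv]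
  have := sin_pos_of_pos_of_lt_pi hθ.1 (by linarith [hθ.2, pi_pos])
  have := cos_pos_of_mem_Ioo ⟨by linarith [hθ.1, pi_pos], hθ.2⟩
  have := one_sub_mul_sin_sq_pos hm1 θ
  positivity

lemma image_inv_one_sub_mul_sin_sq (hm0 : 0 < m) (hm1 : m < 1) :
    (fun θ => (1 - m * sin θ ^ 2)⁻¹) '' Set.Ioo 0 (π / 2) = Set.Ioo 1 (1 - m)⁻¹ := by
  have hmono := strictMonoOn_inv_one_sub_mul_sin_sq hm0 hm1
  have hends : Set.Ioo 1 (1 - m)⁻¹ =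
      Set.Ioo ((1 - m * sin 0 ^ 2)⁻¹) ((1 - m * sin (π / 2) ^ 2)⁻¹) := by
    simp
  have hpi : (0:ℝ) ≤ π / 2 := by positivity
  rw [hends]
  refine subset_antisymm ?_ (intermediate_value_Ioo hpi fun θ _ =>
    (hasDerivAt_inv_one_sub_mul_sin_sq hm1 θ).continuousAt.continuousWithinAt)
  rintro _ ⟨θ, hθ, rfl⟩
  exact ⟨hmono (Set.left_mem_Icc.2 hpi) (Set.Ioo_subset_Icc_self hθ) hθ.1,
    hmono (Set.Ioo_subset_Icc_self hθ) (Set.right_mem_Icc.2 hpi) hθ.2⟩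

lemma abs_deriv_mul_legendre_integrand {θ : ℝ} (hm0 : 0 < m) (hm1 : m < 1)
    (hθ : θ ∈ Set.Ioo 0 (π / 2)) :
    let x := (1 - m * sin θ ^ 2)⁻¹
    |2 * m * sin θ * cos θ / (1 - m * sin θ ^ 2) ^ 2| *
        (1 / √(x * (x - 1) * (1 - (1 - m) * x))) = 2 / √(1 - m * sin θ ^ 2) := by
  intro x
  have hs := sin_pos_of_pos_of_lt_pi hθ.1 (by linarith [hθ.2, pi_pos])
  have hc := cos_pos_of_mem_Ioo ⟨by linarith [hθ.1, pi_pos], hθ.2⟩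
  have hD := one_sub_mul_sin_sq_pos hm1 θ
  have hsqrtD := sqrt_pos.2 hD
  have hcube : x * (x - 1) * (1 - (1 - m) * x)
      = (m * sin θ * cos θ / (1 - m * sin θ ^ 2)) ^ 2 * (1 - m * sin θ ^ 2)⁻¹ := by
    simp only [x]
    rw [div_pow, mul_pow, mul_pow, cos_sq']
    field_simp
    ring
  rw [hcube, sqrt_mul (sq_nonneg _), sqrt_sq (by positivity), sqrt_inv,
    abs_of_pos (by positivity)]
  field_simp
  rw [sq_sqrt hD.le]

end LegendreSubstitution

lemma integral_legendre_eq_two_mul_integral_sin_sq {t : ℝ} (ht0 : 0 < t) (ht1 : t < 1) :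
    ∫ x in (1:ℝ)..(1/t), 1 / √(x * (x - 1) * (1 - t * x))
      = 2 * ∫ θ in (0:ℝ)..π/2, 1 / √(1 - (1 - t) * sin θ ^ 2) := by
  obtain ⟨m, rfl⟩ : ∃ m, t = 1 - m := ⟨1 - t, by ring⟩
  have hm0 : 0 < m := by linarith
  have hm1 : m < 1 := by linarith
  have hpi : (0:ℝ) ≤ π / 2 := by positivity
  have hinj : Set.InjOn (fun θ => (1 - m * sin θ ^ 2)⁻¹) (Set.Ioo 0 (π / 2)) :=
    (strictMonoOn_inv_one_sub_mul_sin_sq hm0 hm1).injOn.mono Set.Ioo_subset_Icc_self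
  rw [intervalIntegral.integral_of_le (one_le_one_div ht0 ht1.le), integral_Ioc_eq_integral_Ioo,
    intervalIntegral.integral_of_le hpi, integral_Ioc_eq_integral_Ioo, one_div (1 - m),
    ← image_inv_one_sub_mul_sin_sq hm0 hm1,
    integral_image_eq_integral_abs_deriv_smul measurableSet_Ioo
      (fun θ _ => (hasDerivAt_inv_one_sub_mul_sin_sq hm1 θ).hasDerivWithinAt) hinj,
    ← integral_const_mul]
  refine setIntegral_congr_fun measurableSet_Ioo fun θ hθ => ?_
  simpa [div_eq_mul_inv] using abs_deriv_mul_legendre_integrand hm0 hm1 hθ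

theorem stmt10 (t : ℝ) (ht0 : 0 < t) (ht1 : t < 1) :
    ∫ x in (1:ℝ)..(1/t), 1 / Real.sqrt (x * (x - 1) * (1 - t * x))
      = π * hyp2F1 (1/2) (1/2) 1 (1 - t) := by
  rw [integral_legendre_eq_two_mul_integral_sin_sq ht0 ht1,
    integral_one_div_sqrt_one_sub_mul_sin_sq (by linarith) (by linarith)]
  ring
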